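/- Let d ≥ 1, t₀ ∈ ℝ, and let A : ℝ → ℂ^{d×d} be twice continuously differentiable on a neighborhood of t₀. Define E(τ) = exp(τ·A(t₀ + τ/2)) and Γ(τ) = E'(τ)·E(τ)⁻¹ (the logarithmic derivative of the exponential midpoint propagator; note E(τ) is invertible since it is a matrix exponential). Then Γ(0) = A(t₀) and Γ'(0) = A'(t₀). -/

import Mathlib

/-!
Write `E τ = exp (τ • C τ)` with `C τ = A (t₀ + τ / 2)`. Since `τ • C τ` commutes with `C τ`, the
derivative of `exp` at `τ • C τ` in the direction `C τ` is `C τ * E τ`; the chain rule then gives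
`E' τ = (C τ + τ • g τ) * E τ` with `g τ = D exp (τ • C τ) (C' τ) * (E τ)⁻¹` continuous.
Hence `Γ = C + τ • g` near `0`, so `Γ 0 = A t₀` and, as `D exp 0 = id`,
`Γ' 0 = C' 0 + g 0 = A' t₀ / 2 + A' t₀ / 2`.
-/

open Filter Topology NormedSpace

theorem hasDerivAt_smul_self_of_continuousAt {F : Type*} [NormedAddCommGroup F]
    [NormedSpace ℝ F] {g : ℝ → F} (hg : ContinuousAt g 0) :
    HasDerivAt (fun τ => τ • g τ) (g 0) 0 := by
  refine hasDerivAt_iff_tendsto_slope.2 ((hg.tendsto.mono_left nhdsWithin_le_nhds).congr' ?_)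
  filter_upwards [self_mem_nhdsWithin] with τ (hτ : τ ≠ 0)
  simp [slope_def_module, smul_smul, hτ]

section BanachAlgebra

variable {𝔸 : Type*} [NormedRing 𝔸] [NormedAlgebra ℝ 𝔸] [CompleteSpace 𝔸]

theorem NormedSpace.contDiff_exp : ContDiff ℝ ⊤ (exp : 𝔸 → 𝔸) :=
  contDiff_iff_contDiffAt.2 fun x => (exp_analytic x).contDiffAt

theorem NormedSpace.fderiv_exp_apply_of_commute {x y : 𝔸} (h : Commute x y) :
    fderiv ℝ exp x y = y * exp x := by
  let _ : NormedAlgebra ℚ 𝔸 := .restrictScalars ℚ ℝ 𝔸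
  have hline : HasDerivAt (fun s : ℝ => x + s • y) y 0 := by
    simpa using ((hasDerivAt_id' (0 : ℝ)).smul_const y).const_add x
  have hsplit : HasDerivAt (fun s : ℝ => exp (s • y) * exp x) (y * exp x) 0 := by
    simpa using (hasDerivAt_exp_smul_const (𝕂 := ℝ) y (0 : ℝ)).mul_const (exp x)
  refine ((exp_analytic x).differentiableAt.hasFDerivAt.comp_hasDerivAt_of_eq 0 hline
    (by simp)).unique (hsplit.congr_of_eventuallyEq (.of_forall fun s => ?_))
  simp only [Function.comp_apply]
  rw [add_comm, exp_add_of_commute (h.symm.smul_left s)]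

theorem NormedSpace.hasDerivAt_exp_smul_self {C : ℝ → 𝔸} {c : 𝔸} {τ : ℝ}
    (hC : HasDerivAt C c τ) :
    HasDerivAt (fun σ => exp (σ • C σ))
      ((C τ + τ • (fderiv ℝ exp (τ • C τ) c * exp (-(τ • C τ)))) * exp (τ • C τ)) τ := by
  let _ : NormedAlgebra ℚ 𝔸 := .restrictScalars ℚ ℝ 𝔸
  have hB : HasDerivAt (fun σ => σ • C σ) (τ • c + C τ) τ := by
    have := (hasDerivAt_id τ).smul hC
    rwa [one_smul] at this
  refine ((exp_analytic (τ • C τ)).differentiableAt.hasFDerivAt.comp_hasDerivAt τ hB).congr_deriv ?_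
  rw [map_add, map_smul, fderiv_exp_apply_of_commute ((Commute.refl (C τ)).smul_left τ),
    add_mul, smul_mul_assoc, mul_assoc, ← exp_add_of_commute (Commute.refl _).neg_left,
    neg_add_cancel, exp_zero, mul_one, add_comm]

theorem exists_hasDerivAt_exp_midpoint {A A' : ℝ → 𝔸} {t₀ : ℝ}
    (hA : ∀ᶠ t in 𝓝 t₀, HasDerivAt A (A' t) t) (hA' : ContinuousAt A' t₀) :
    ∃ Γ : ℝ → 𝔸, (∀ᶠ τ in 𝓝 0, HasDerivAt (fun σ => exp (σ • A (t₀ + σ / 2)))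
        (Γ τ * exp (τ • A (t₀ + τ / 2))) τ) ∧ Γ 0 = A t₀ ∧ HasDerivAt Γ (A' t₀) 0 := by
  set C : ℝ → 𝔸 := fun σ => A (t₀ + σ / 2)
  set C' : ℝ → 𝔸 := fun σ => (2⁻¹ : ℝ) • A' (t₀ + σ / 2)
  set g : ℝ → 𝔸 := fun σ => fderiv ℝ exp (σ • C σ) (C' σ) * exp (-(σ • C σ))
  have hmid : ContinuousAt (fun σ : ℝ => t₀ + σ / 2) 0 := by fun_prop
  have hmid0 : t₀ + (0 : ℝ) / 2 = t₀ := by simp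
  have hC : ∀ᶠ σ in 𝓝 0, HasDerivAt C (C' σ) σ := by
    refine (hmid.tendsto.eventually (hmid0 ▸ hA)).mono fun σ h => ?_
    exact (h.scomp σ (((hasDerivAt_id' σ).div_const 2).const_add t₀)).congr_deriv
      (by rw [one_div])
  have hg : ContinuousAt g 0 := by
    have hB : ContinuousAt (fun σ => σ • C σ) 0 :=
      continuousAt_id.smul hC.self_of_nhds.continuousAt
    exact (((contDiff_exp.continuous_fderiv (by simp)).continuousAt.comp hB).clm_apply
      ((hA'.comp_of_eq hmid hmid0).const_smul _)).mul
      (contDiff_exp.continuous.continuousAt.comp hB.neg)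
  have hg0 : g 0 = C' 0 := by simp [g, hasFDerivAt_exp_zero.fderiv]
  refine ⟨fun σ => C σ + σ • g σ, hC.mono fun σ h => hasDerivAt_exp_smul_self h, by simp [C], ?_⟩
  refine (hC.self_of_nhds.add (hasDerivAt_smul_self_of_continuousAt hg)).congr_deriv ?_
  rw [hg0, ← two_smul ℝ]
  simp [C', smul_smul]

end BanachAlgebra

attribute [local instance] Matrix.normedAddCommGroup Matrix.normedSpace

theorem Matrix.exists_hasDerivAt_exp_midpoint {m : Type*} [Fintype m] [DecidableEq m]
    {A A' : ℝ → Matrix m m ℂ} {t₀ : ℝ}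
    (hA : ∀ᶠ t in 𝓝 t₀, HasDerivAt A (A' t) t) (hA' : ContinuousAt A' t₀) :
    ∃ Γ : ℝ → Matrix m m ℂ, (∀ᶠ τ in 𝓝 0, HasDerivAt (fun σ => exp (σ • A (t₀ + σ / 2)))
        (Γ τ * exp (τ • A (t₀ + τ / 2))) τ) ∧ Γ 0 = A t₀ ∧ HasDerivAt Γ (A' t₀) 0 := by
  -- Pass to the Banach-algebra norm `linftyOp`; derivatives transfer through
  -- `hasDerivAt_iff_tendsto_slope`, as both norms induce the product topology.
  obtain ⟨Γ, hE, hΓ0, hΓ⟩ := @_root_.exists_hasDerivAt_exp_midpoint _ Matrix.linftyOpNormedRing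
    Matrix.linftyOpNormedAlgebra inferInstance A A' t₀
    (hA.mono fun t h => hasDerivAt_iff_tendsto_slope.2 (hasDerivAt_iff_tendsto_slope.1 h)) hA'
  exact ⟨Γ, hE.mono fun τ h => hasDerivAt_iff_tendsto_slope.2 (hasDerivAt_iff_tendsto_slope.1 h),
    hΓ0, hasDerivAt_iff_tendsto_slope.2 (hasDerivAt_iff_tendsto_slope.1 hΓ)⟩

theorem midpoint_Gamma_zero_and_first_derivative_general
    (d : ℕ) (t₀ : ℝ)
    (A : ℝ → Matrix (Fin d) (Fin d) ℂ)
    (hA : ContDiffAt ℝ 2 A t₀)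
    (E Γ : ℝ → Matrix (Fin d) (Fin d) ℂ)
    (hE : ∀ τ, E τ = NormedSpace.exp (τ • A (t₀ + τ/2)))
    (hΓ : ∀ τ, Γ τ = deriv E τ * (E τ)⁻¹) :
    Γ 0 = A t₀ ∧ deriv Γ 0 = deriv A t₀ := by
  obtain rfl : E = fun τ => exp (τ • A (t₀ + τ / 2)) := funext hE
  have hA_deriv : ∀ᶠ t in 𝓝 t₀, HasDerivAt A (deriv A t) t :=
    (hA.eventually (by simp)).mono fun t ht => (ht.differentiableAt (by simp)).hasDerivAt
  obtain ⟨G, hEG, hG0, hG⟩ := Matrix.exists_hasDerivAt_exp_midpoint hA_deriv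
    (hA.derivWithin (m := 0) (by norm_num)).continuousAt
  have hΓG : Γ =ᶠ[𝓝 0] G := hEG.mono fun τ hτ => by
    -- restated so that its `deriv` carries the bare topological instances used in `hΓ`
    have hderiv : deriv (fun σ => exp (σ • A (t₀ + σ / 2))) τ = G τ * exp (τ • A (t₀ + τ / 2)) :=
      hτ.deriv
    rw [hΓ, hderiv]
    exact Matrix.mul_nonsing_inv_cancel_right _ _
      ((Matrix.isUnit_iff_isUnit_det _).1 (Matrix.isUnit_exp _))
  exact ⟨hΓG.eq_of_nhds.trans hG0, hΓG.deriv_eq.trans hG.deriv⟩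

/-- The logarithmic derivative Γ of the exponential midpoint propagator satisfies
Γ(0) = A(t₀) and Γ'(0) = A'(t₀). -/
theorem midpoint_Gamma_zero_and_first_derivative
    (d : ℕ) (hd : 1 ≤ d) (t₀ : ℝ)
    (A : ℝ → Matrix (Fin d) (Fin d) ℂ)
    (hA : ContDiffAt ℝ 2 A t₀)
    (E Γ : ℝ → Matrix (Fin d) (Fin d) ℂ)
    (hE : ∀ τ, E τ = NormedSpace.exp (τ • A (t₀ + τ/2)))
    (hΓ : ∀ τ, Γ τ = deriv E τ * (E τ)⁻¹) :
    Γ 0 = A t₀ ∧ deriv Γ 0 = deriv A t₀ :=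
  midpoint_Gamma_zero_and_first_derivative_general d t₀ A hA E Γ hE hΓ
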